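/- The sequence Z of gap-lengths of 1's in the Thue–Morse sequence is 2-automatic: it is the image, under the coding 0 → 2, 1 → 1, 2 → 0, 3 → 1, of the iterative fixed point beginning with 0 of the 2-uniform morphism 0 → 01, 1 → 20, 2 → 23, 3 → 02. -/

import Mathlib

/-- Extension of a substitution `φ : A → B*` to finite words. -/
def wordMap {A B : Type} (φ : A → List B) (w : List A) : List B := w.flatMap φ

/-- `n`-fold iteration of a morphism applied to a word. -/
def iterWord {A : Type} (φ : A → List A) (n : ℕ) (w : List A) : List A :=
  (wordMap φ)^[n] w

/-- A morphism is `k`-uniform if every letter has image of length `k`. -/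
def Uniform {A : Type} (k : ℕ) (φ : A → List A) : Prop := ∀ a, (φ a).length = k

/-- The finite word `w` is a prefix of the infinite sequence `s`. -/
def PrefixSeq {A : Type} (w : List A) (s : ℕ → A) : Prop :=
  ∀ i, i < w.length → w[i]? = some (s i)

/-- `φ` is prolongable on `a₀`: `φ(a₀) = a₀ x` with `x` nonempty and iterates of `x` never empty. -/
def Prolongable {A : Type} (φ : A → List A) (a₀ : A) : Prop :=
  ∃ x : List A, x ≠ [] ∧ φ a₀ = a₀ :: x ∧ ∀ ℓ, iterWord φ ℓ x ≠ []

/-- `s` is the iterative fixed point of `φ` beginning with `a₀`: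
`φ` is prolongable on `a₀` and every iterate `φ^n(a₀)` is a prefix of `s`
(their lengths tend to infinity thanks to prolongability, so `s` is determined). -/
def IsIterFix {A : Type} (φ : A → List A) (a₀ : A) (s : ℕ → A) : Prop :=
  Prolongable φ a₀ ∧ ∀ n, PrefixSeq (iterWord φ n [a₀]) s

/-- `s` is ultimately periodic. -/
def UltimatelyPeriodic {A : Type} (s : ℕ → A) : Prop :=
  ∃ N p : ℕ, 1 ≤ p ∧ ∀ n, N ≤ n → s (n + p) = s n

/-- The extension of `φ` to infinite sequences fixes `s`: for every `m`,
the image of the length-`m` prefix of `s` is again a prefix of `s`. -/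
def SeqFixedPoint {A : Type} (φ : A → List A) (s : ℕ → A) : Prop :=
  ∀ m, PrefixSeq (wordMap φ ((List.range m).map s)) s

/-- The Thue–Morse morphism `0 ↦ 01`, `1 ↦ 10` (with `0 := false`, `1 := true`). -/
def mu : Bool → List Bool
  | false => [false, true]
  | true => [true, false]

/-- The 2-uniform morphism `0 ↦ 01, 1 ↦ 20, 2 ↦ 23, 3 ↦ 02`. -/
def rho : Fin 4 → List (Fin 4) := ![[0, 1], [2, 0], [2, 3], [0, 2]]

/-- The coding `0 ↦ 2, 1 ↦ 1, 2 ↦ 0, 3 ↦ 1`. -/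
def code : Fin 4 → Fin 3 := ![2, 1, 0, 1]

/-!
Write `t` for the Thue–Morse word. Since `t (2j) = t j` and `t (2j+1) = ¬ t j`, each block
`t (2k) t (2k+1)` contains exactly one `0`, at position `2k + t k`; hence the gap following the
`k`-th zero is `1 + t (k+1) - t k`, a function of the pair `(t k, t (k+1))`. Encoding these four
pairs as letters, the recursion for `t` turns into the 2-uniform morphism `ρ` on the pairs, and the
gap is recovered through `code`.
-/

section UniformMorphism

variable {A : Type} {φ : A → List A} {k : ℕ}

lemma iterWord_succ (φ : A → List A) (n : ℕ) (w : List A) :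
    iterWord φ (n + 1) w = wordMap φ (iterWord φ n w) :=
  Function.iterate_succ_apply' _ _ _

lemma Uniform.length_wordMap (hφ : Uniform k φ) (w : List A) :
    (wordMap φ w).length = k * w.length := by
  induction w with
  | nil => rfl
  | cons a w ih =>
    simp only [wordMap, List.flatMap_cons, List.length_append, List.length_cons] at ih ⊢
    rw [hφ a, ih]
    ring

lemma Uniform.length_iterWord (hφ : Uniform k φ) (n : ℕ) (w : List A) :
    (iterWord φ n w).length = k ^ n * w.length := by
  induction n with
  | zero => simp [iterWord]
  | succ n ih => rw [iterWord_succ, hφ.length_wordMap, ih, pow_succ]; ring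

lemma Uniform.getElem?_wordMap (hφ : Uniform k φ) (w : List A) {j r : ℕ} (hr : r < k) :
    (wordMap φ w)[k * j + r]? = w[j]?.bind fun a => (φ a)[r]? := by
  induction w generalizing j with
  | nil => simp [wordMap]
  | cons a w ih =>
    rw [wordMap, List.flatMap_cons]
    cases j with
    | zero => rw [List.getElem?_append_left (by rw [hφ a]; omega)]; simp
    | succ j =>
      have hshift : k * (j + 1) + r - k = k * j + r := by rw [Nat.mul_succ]; omega
      rw [List.getElem?_append_right (by rw [hφ a, Nat.mul_succ]; omega), hφ a, hshift]
      exact ih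

lemma Uniform.prolongable (hφ : Uniform k φ) {a₀ : A} {x : List A} (hx : x ≠ [])
    (ha₀ : φ a₀ = a₀ :: x) : Prolongable φ a₀ := by
  have hk : 0 < k := by rw [← hφ a₀, ha₀]; exact Nat.succ_pos _
  refine ⟨x, hx, ha₀, fun ℓ hnil => ?_⟩
  have hlen := hφ.length_iterWord ℓ x
  rw [hnil, List.length_nil] at hlen
  exact absurd hlen.symm (Nat.mul_ne_zero (pow_ne_zero _ hk.ne') (List.length_pos_iff.2 hx).ne')

lemma IsIterFix.getElem?_apply (hφ : Uniform k φ) {a₀ : A} {s : ℕ → A} (hs : IsIterFix φ a₀ s)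
    (j : ℕ) {r : ℕ} (hr : r < k) : (φ (s j))[r]? = some (s (k * j + r)) := by
  obtain ⟨⟨x, hx, ha₀, -⟩, hpref⟩ := hs
  have hk : 1 < k := by
    rw [← hφ a₀, ha₀, List.length_cons]
    exact Nat.succ_lt_succ (List.length_pos_iff.2 hx)
  have hj : j < k ^ j := Nat.lt_pow_self hk
  have hlen (n : ℕ) : (iterWord φ n [a₀]).length = k ^ n := by
    rw [hφ.length_iterWord, List.length_singleton, mul_one]
  have hnext := hpref (j + 1) (k * j + r) (by rw [hlen, pow_succ]; nlinarith)
  rw [iterWord_succ, hφ.getElem?_wordMap _ hr, hpref j j (by rw [hlen]; exact hj)] at hnext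
  exact hnext

lemma isIterFix_of_getElem? (hφ : Uniform k φ) {a₀ : A} {x : List A} (hx : x ≠ [])
    (ha₀ : φ a₀ = a₀ :: x) {s : ℕ → A} (hs₀ : s 0 = a₀)
    (hs : ∀ j r, r < k → (φ (s j))[r]? = some (s (k * j + r))) : IsIterFix φ a₀ s := by
  have hk : 0 < k := by rw [← hφ a₀, ha₀]; exact Nat.succ_pos _
  refine ⟨hφ.prolongable hx ha₀, fun n => ?_⟩
  induction n with
  | zero =>
    intro i hi
    simp only [iterWord, Function.iterate_zero, id, List.length_singleton, Nat.lt_one_iff] at hi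
    simp [iterWord, hi, hs₀]
  | succ n ih =>
    intro i hi
    rw [hφ.length_iterWord, List.length_singleton, mul_one, pow_succ] at hi
    have hdiv : i / k < (iterWord φ n [a₀]).length := by
      rw [hφ.length_iterWord, List.length_singleton, mul_one]
      exact Nat.div_lt_of_lt_mul (by rwa [mul_comm])
    rw [← Nat.div_add_mod i k, iterWord_succ, hφ.getElem?_wordMap _ (Nat.mod_lt i hk),
      ih _ hdiv]
    exact hs _ _ (Nat.mod_lt i hk)

end UniformMorphism

section ThueMorse

lemma mu_uniform : Uniform 2 mu := by
  intro a
  cases a <;> rfl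

lemma rho_uniform : Uniform 2 rho := by
  intro a
  fin_cases a <;> rfl

variable {t : ℕ → Bool}

lemma thueMorse_two_mul (ht : IsIterFix mu false t) (j : ℕ) : t (2 * j) = t j := by
  have h := ht.getElem?_apply mu_uniform j (r := 0) (by norm_num)
  cases hj : t j <;> simp_all [mu]

lemma thueMorse_two_mul_add_one (ht : IsIterFix mu false t) (j : ℕ) :
    t (2 * j + 1) = !t j := by
  have h := ht.getElem?_apply mu_uniform j (r := 1) (by norm_num)
  cases hj : t j <;> simp_all [mu]

lemma strictMono_two_mul_add_toNat (t : ℕ → Bool) : StrictMono fun k => 2 * k + (t k).toNat :=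
  strictMono_nat_of_lt_succ fun k => by
    have := Bool.toNat_le (t k)
    omega

lemma thueMorse_range_two_mul_add_toNat (ht : IsIterFix mu false t) :
    Set.range (fun k => 2 * k + (t k).toNat) = {n | t n = false} := by
  ext n
  constructor
  · rintro ⟨k, rfl⟩
    cases hk : t k
    · simpa [hk] using (thueMorse_two_mul ht k).trans hk
    · simpa [hk] using thueMorse_two_mul_add_one ht k
  · intro hn
    obtain ⟨k, rfl | rfl⟩ := Nat.even_or_odd' n
    · refine ⟨k, ?_⟩
      simp [← thueMorse_two_mul ht k, hn.symm]
    · have hk : t k = true := by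
        simpa using (thueMorse_two_mul_add_one ht k).symm.trans hn
      exact ⟨k, by simp [hk]⟩

lemma thueMorse_zeros_eq (ht : IsIterFix mu false t) {zeros : ℕ → ℕ} (hmono : StrictMono zeros)
    (hz : ∀ i, t (zeros i) = false) (hall : ∀ n, t n = false → ∃ i, zeros i = n) :
    zeros = fun k => 2 * k + (t k).toNat := by
  refine (hmono.range_inj (strictMono_two_mul_add_toNat t)).1 ?_
  rw [thueMorse_range_two_mul_add_toNat ht]
  ext n
  exact ⟨fun ⟨i, hi⟩ => hi ▸ hz i, hall n⟩

/-- The letter of `ρ`'s fixed point at `n` encodes the pair `(t n, t (n + 1))`. -/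
def pairCode : Bool → Bool → Fin 4
  | false, true => 0
  | true, true => 1
  | true, false => 2
  | false, false => 3

lemma rho_pairCode (a b : Bool) : rho (pairCode a b) = [pairCode a !a, pairCode (!a) b] := by
  cases a <;> cases b <;> rfl

lemma code_pairCode (a b : Bool) : (code (pairCode a b) : ℕ) = 1 + b.toNat - a.toNat := by
  cases a <;> cases b <;> rfl

lemma isIterFix_rho_pairCode (ht : IsIterFix mu false t) :
    IsIterFix rho 0 fun n => pairCode (t n) (t (n + 1)) := by
  have ht₀ : t 0 = false := by simpa [iterWord] using ht.2 0 0
  refine isIterFix_of_getElem? rho_uniform (x := [1]) (List.cons_ne_nil _ _) rfl ?_ ?_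
  · have ht₁ : t 1 = true := by simpa [ht₀] using thueMorse_two_mul_add_one ht 0
    simp [ht₀, ht₁, pairCode]
  · intro j r hr
    have hsucc : 2 * j + 1 + 1 = 2 * (j + 1) := by ring
    interval_cases r <;>
      simp [rho_pairCode, thueMorse_two_mul ht, thueMorse_two_mul_add_one ht, hsucc]

end ThueMorse

theorem stmt17 (t : ℕ → Bool) (ht : IsIterFix mu false t)
    (zeros : ℕ → ℕ) (hmono : StrictMono zeros)
    (hz : ∀ i, t (zeros i) = false)
    (hall : ∀ n, t n = false → ∃ i, zeros i = n)
    (Z : ℕ → Fin 3)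
    (hZ : ∀ i, (Z i : ℕ) = zeros (i + 1) - zeros i - 1) :
    Uniform 2 rho ∧ ∃ s : ℕ → Fin 4, IsIterFix rho 0 s ∧ ∀ n, Z n = code (s n) := by
  refine ⟨rho_uniform, _, isIterFix_rho_pairCode ht, fun n => Fin.ext ?_⟩
  rw [hZ, thueMorse_zeros_eq ht hmono hz hall, code_pairCode]
  dsimp only
  have := Bool.toNat_le (t n)
  have := Bool.toNat_le (t (n + 1))
  omega
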